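/- arXiv:math/0608116 — 3 statements merged into one kernel-verified Lean document; each statement's English description precedes it below -/
import Mathlib

section
/- Let B be a Boolean algebra, S a finite subset of B closed under meet ⊓ and containing ⊤, and □ : B → B a map satisfying the modal axioms (m.i) and (m.ii). Then the basic propositional assignments are exhaustive: for every φ ∈ S, ⊔_{ψ∈S, ψ≤φ} ψ^□ = □φ; in particular, ⊔_{ψ∈S} ψ^□ = ⊤. -/
/-! The bpa of `φ` is `□φ \ ⊔_{ψ<φ} □ψ`, so `□φ ≤ φ^□ ⊔ ⊔_{ψ<φ} □ψ`; well-founded induction along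
`<` on the finite set `S` unfolds every `□ψ` into bpa's below `φ`. Conversely each `ψ^□ ≤ □ψ ≤ □φ`
for `ψ ≤ φ`, since the modal axioms make `□` monotone. -/

open scoped Classical

/-- The basic propositional assignment (bpa) of `φ`:
`φ^□ = □φ ⊓ (⊔_{ψ ∈ S, ψ < φ} □ψ)ᶜ`. -/
noncomputable def bpa {B : Type*} [BooleanAlgebra B]
    (S : Finset B) (box : B → B) (φ : B) : B :=
  box φ ⊓ ((S.filter fun ψ => ψ < φ).sup box)ᶜ

lemma monotone_of_map_compl_sup_le {B : Type*} [BooleanAlgebra B] {f : B → B}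
    (h_top : f ⊤ = ⊤) (h : ∀ x y : B, f (xᶜ ⊔ y) ≤ (f x)ᶜ ⊔ f y) : Monotone f := by
  intro x y hxy
  have hxy' : xᶜ ⊔ y = ⊤ :=
    codisjoint_iff.mp (codisjoint_iff_compl_le_right.mpr (by rwa [compl_compl]))
  have hfxy := h x y
  rw [hxy', h_top, top_le_iff] at hfxy
  simpa using codisjoint_iff_compl_le_right.mp (codisjoint_iff.mpr hfxy)

section

variable {B : Type*} [BooleanAlgebra B] (S : Finset B) (box : B → B)

lemma bpa_eq_sdiff (φ : B) : bpa S box φ = box φ \ (S.filter fun ψ => ψ < φ).sup box :=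
  sdiff_eq.symm

lemma bpa_le_box (φ : B) : bpa S box φ ≤ box φ :=
  inf_le_left

lemma box_le_sup_bpa {φ : B} (hφ : φ ∈ S) :
    box φ ≤ (S.filter fun ψ => ψ ≤ φ).sup (bpa S box) := by
  refine (S.finite_toSet.wellFoundedOn (r := (· < ·))).induction hφ
    (P := fun φ => box φ ≤ (S.filter fun ψ => ψ ≤ φ).sup (bpa S box)) fun φ hφ ih => ?_
  have hφ_mem : φ ∈ S.filter fun ψ => ψ ≤ φ := Finset.mem_filter.mpr ⟨hφ, le_rfl⟩
  calc box φ ≤ bpa S box φ ⊔ (S.filter fun ψ => ψ < φ).sup box := by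
        rw [bpa_eq_sdiff, sdiff_sup_self]; exact le_sup_left
    _ ≤ (S.filter fun ψ => ψ ≤ φ).sup (bpa S box) := by
        refine sup_le (Finset.le_sup hφ_mem) (Finset.sup_le fun ψ hψ => ?_)
        obtain ⟨hψS, hψφ⟩ := Finset.mem_filter.mp hψ
        refine (ih ψ hψS hψφ).trans (Finset.sup_mono fun χ hχ => ?_)
        obtain ⟨hχS, hχψ⟩ := Finset.mem_filter.mp hχ
        exact Finset.mem_filter.mpr ⟨hχS, hχψ.trans hψφ.le⟩

variable {box} in
lemma sup_bpa_le_box (hbox : Monotone box) (φ : B) :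
    (S.filter fun ψ => ψ ≤ φ).sup (bpa S box) ≤ box φ :=
  Finset.sup_le fun ψ hψ => (bpa_le_box S box ψ).trans (hbox (Finset.mem_filter.mp hψ).2)

end

theorem bpa_exhaustive_general {B : Type*} [BooleanAlgebra B]
    (S : Finset B)
    (htop : ⊤ ∈ S)
    (box : B → B)
    (mi : box ⊤ = ⊤)
    (mii : ∀ x y : B, box (xᶜ ⊔ y) ≤ (box x)ᶜ ⊔ box y) :
    (∀ φ ∈ S, (S.filter fun ψ => ψ ≤ φ).sup (bpa S box) = box φ) ∧
      S.sup (bpa S box) = ⊤ := by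
  have hbox := monotone_of_map_compl_sup_le mi mii
  have hsup : ∀ φ ∈ S, (S.filter fun ψ => ψ ≤ φ).sup (bpa S box) = box φ :=
    fun φ hφ => (sup_bpa_le_box S hbox φ).antisymm (box_le_sup_bpa S box hφ)
  refine ⟨hsup, ?_⟩
  simpa [mi] using hsup ⊤ htop

/-- The basic propositional assignments are exhaustive:
`⊔_{ψ ∈ S, ψ ≤ φ} ψ^□ = □φ` for every `φ ∈ S`; in particular `⊔_{ψ ∈ S} ψ^□ = ⊤`. -/
theorem bpa_exhaustive {B : Type*} [BooleanAlgebra B]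
    (S : Finset B)
    (hmeet : ∀ x ∈ S, ∀ y ∈ S, x ⊓ y ∈ S)
    (htop : ⊤ ∈ S)
    (box : B → B)
    (mi : box ⊤ = ⊤)
    (mii : ∀ x y : B, box (xᶜ ⊔ y) ≤ (box x)ᶜ ⊔ box y) :
    (∀ φ ∈ S, (S.filter fun ψ => ψ ≤ φ).sup (bpa S box) = box φ) ∧
      S.sup (bpa S box) = ⊤ :=
  bpa_exhaustive_general S htop box mi mii
end

section
/- Let B be a Boolean algebra, S a finite subset of B closed under meet ⊓ and containing ⊤, and let □ᵢ, □ⱼ, □ᵢⱼ : B → B all satisfy the modal axioms (m.i) and (m.ii), axiom (m.iv) (□ᵢ x ≤ □ᵢⱼ x and □ⱼ x ≤ □ᵢⱼ x for all x ∈ B) and the independence axiom (m.indep) (□ᵢⱼ x ≤ □ᵢ x ⊔ □ⱼ x for all x ∈ B). Then for every φ ∈ S, □ᵢⱼ φ = ⊔_{ψ,η∈S: ψ⊓η ≤ φ} (□ᵢψ ⊓ □ⱼη) = ⊔_{ψ,η∈S: ψ⊓η ≤ φ} (ψ^{□ᵢ} ⊓ η^{□ⱼ}). -/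
/-!
Each box operator is monotone and preserves binary meets. Monotonicity lets one peel
`□φ` into the basic assignments of the elements of `S` below `φ`, by well-founded
induction on the finite poset `S`. Independence bounds `□ᵢⱼφ` by `□ᵢφ ⊓ □ⱼ⊤ ⊔ □ᵢ⊤ ⊓ □ⱼφ`,
and (m.iv) together with meet preservation gives the converse bound `□ᵢψ ⊓ □ⱼη ≤ □ᵢⱼ(ψ ⊓ η)`.
-/

open scoped Classical

section Modal

variable {B : Type*} [BooleanAlgebra B] {box : B → B}

-- Since `xᶜ ⊔ y = x ⇨ y`, (m.ii) is the axiom K: `□(x ⇨ y) ≤ □x ⇨ □y`.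
theorem monotone_of_modal (mi : box ⊤ = ⊤)
    (mii : ∀ x y : B, box (xᶜ ⊔ y) ≤ (box x)ᶜ ⊔ box y) : Monotone box := by
  intro x y hxy
  have h := mii x y
  rw [sup_comm, ← himp_eq, himp_eq_top_iff.mpr hxy, mi, sup_comm, ← himp_eq, top_le_iff,
    himp_eq_top_iff] at h
  exact h

theorem inf_le_map_inf_of_modal (mi : box ⊤ = ⊤)
    (mii : ∀ x y : B, box (xᶜ ⊔ y) ≤ (box x)ᶜ ⊔ box y) (x y : B) :
    box x ⊓ box y ≤ box (x ⊓ y) := by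
  have hx : x ≤ yᶜ ⊔ x ⊓ y := by
    rw [sup_comm, ← himp_eq]
    exact le_himp_iff.mpr le_rfl
  have h := (monotone_of_modal mi mii hx).trans (mii y (x ⊓ y))
  rwa [sup_comm, ← himp_eq, le_himp_iff] at h

end Modal

section Bpa

variable {B : Type*} [BooleanAlgebra B] {S : Finset B} {box : B → B}

theorem bpa_le (S : Finset B) (box : B → B) (φ : B) : bpa S box φ ≤ box φ :=
  inf_le_left

theorem sup_bpa_eq_of_monotone (hbox : Monotone box) {φ : B} (hφ : φ ∈ S) :
    (S.filter fun ψ => ψ ≤ φ).sup (bpa S box) = box φ := by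
  suffices h : ∀ φ : S, (S.filter fun ψ => ψ ≤ φ.1).sup (bpa S box) = box φ from h ⟨φ, hφ⟩
  intro φ
  induction φ using WellFoundedLT.induction with
  | _ φ ih =>
  obtain ⟨φ, hφ⟩ := φ
  refine le_antisymm (Finset.sup_le fun ψ hψ => ?_) ?_
  · exact (bpa_le S box ψ).trans (hbox (Finset.mem_filter.mp hψ).2)
  have hsplit : box φ ≤ bpa S box φ ⊔ (S.filter fun ψ => ψ < φ).sup box := by
    rw [bpa, ← sdiff_eq, sdiff_sup_self]
    exact le_sup_left
  refine hsplit.trans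
    (sup_le (Finset.le_sup (Finset.mem_filter.mpr ⟨hφ, le_rfl⟩)) (Finset.sup_le fun ψ hψ => ?_))
  obtain ⟨hψS, hψφ⟩ := Finset.mem_filter.mp hψ
  rw [← ih ⟨ψ, hψS⟩ hψφ]
  exact Finset.sup_mono fun χ hχ => by
    simp only [Finset.mem_filter] at hχ ⊢
    exact ⟨hχ.1, hχ.2.trans hψφ.le⟩

end Bpa

section Fused

variable {B : Type*} [BooleanAlgebra B] {S : Finset B} {boxI boxJ boxIJ : B → B}

theorem eq_sup_inf_of_indep (htop : ⊤ ∈ S) (miI : boxI ⊤ = ⊤) (miJ : boxJ ⊤ = ⊤)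
    (hmono : Monotone boxIJ) (hinf : ∀ x y : B, boxIJ x ⊓ boxIJ y ≤ boxIJ (x ⊓ y))
    (mivI : ∀ x : B, boxI x ≤ boxIJ x) (mivJ : ∀ x : B, boxJ x ≤ boxIJ x)
    (mindep : ∀ x : B, boxIJ x ≤ boxI x ⊔ boxJ x) {φ : B} (hφ : φ ∈ S) :
    boxIJ φ =
      ((S ×ˢ S).filter fun q => q.1 ⊓ q.2 ≤ φ).sup (fun q => boxI q.1 ⊓ boxJ q.2) := by
  have hle_sup : ∀ ψ ∈ S, ∀ η ∈ S, ψ ⊓ η ≤ φ → boxI ψ ⊓ boxJ η ≤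
      ((S ×ˢ S).filter fun q => q.1 ⊓ q.2 ≤ φ).sup (fun q => boxI q.1 ⊓ boxJ q.2) :=
    fun ψ hψ η hη hψη => Finset.le_sup (f := fun q : B × B => boxI q.1 ⊓ boxJ q.2)
      (b := (ψ, η)) (Finset.mem_filter.mpr ⟨Finset.mem_product.mpr ⟨hψ, hη⟩, hψη⟩)
  refine le_antisymm ((mindep φ).trans (sup_le ?_ ?_)) (Finset.sup_le fun q hq => ?_)
  · simpa only [miJ, inf_top_eq] using hle_sup φ hφ ⊤ htop inf_le_left
  · simpa only [miI, top_inf_eq] using hle_sup ⊤ htop φ hφ inf_le_right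
  · calc boxI q.1 ⊓ boxJ q.2 ≤ boxIJ q.1 ⊓ boxIJ q.2 := inf_le_inf (mivI _) (mivJ _)
      _ ≤ boxIJ (q.1 ⊓ q.2) := hinf _ _
      _ ≤ boxIJ φ := hmono (Finset.mem_filter.mp hq).2

theorem sup_inf_box_eq_sup_inf_bpa (hI : Monotone boxI) (hJ : Monotone boxJ) (φ : B) :
    ((S ×ˢ S).filter fun q => q.1 ⊓ q.2 ≤ φ).sup (fun q => boxI q.1 ⊓ boxJ q.2) =
      ((S ×ˢ S).filter fun q => q.1 ⊓ q.2 ≤ φ).sup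
        (fun q => bpa S boxI q.1 ⊓ bpa S boxJ q.2) := by
  refine le_antisymm (Finset.sup_le fun q hq => ?_)
    (Finset.sup_mono_fun fun q _ => inf_le_inf (bpa_le S boxI q.1) (bpa_le S boxJ q.2))
  obtain ⟨⟨hψ, hη⟩, hle⟩ := by simpa only [Finset.mem_filter, Finset.mem_product] using hq
  rw [← sup_bpa_eq_of_monotone hI hψ, ← sup_bpa_eq_of_monotone hJ hη, Finset.sup_inf_sup]
  refine Finset.sup_mono fun p hp => ?_
  simp only [Finset.mem_filter, Finset.mem_product] at hp ⊢
  exact ⟨⟨hp.1.1, hp.2.1⟩, (inf_le_inf hp.1.2 hp.2.2).trans hle⟩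

end Fused

theorem box_fused_eq_sup_general {B : Type*} [BooleanAlgebra B]
    (S : Finset B)
    (htop : ⊤ ∈ S)
    (boxI boxJ boxIJ : B → B)
    (miI : boxI ⊤ = ⊤)
    (miiI : ∀ x y : B, boxI (xᶜ ⊔ y) ≤ (boxI x)ᶜ ⊔ boxI y)
    (miJ : boxJ ⊤ = ⊤)
    (miiJ : ∀ x y : B, boxJ (xᶜ ⊔ y) ≤ (boxJ x)ᶜ ⊔ boxJ y)
    (miIJ : boxIJ ⊤ = ⊤)
    (miiIJ : ∀ x y : B, boxIJ (xᶜ ⊔ y) ≤ (boxIJ x)ᶜ ⊔ boxIJ y)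
    (mivI : ∀ x : B, boxI x ≤ boxIJ x)
    (mivJ : ∀ x : B, boxJ x ≤ boxIJ x)
    (mindep : ∀ x : B, boxIJ x ≤ boxI x ⊔ boxJ x) :
    ∀ φ ∈ S,
      boxIJ φ =
          ((S ×ˢ S).filter fun q => q.1 ⊓ q.2 ≤ φ).sup (fun q => boxI q.1 ⊓ boxJ q.2) ∧
        boxIJ φ =
          ((S ×ˢ S).filter fun q => q.1 ⊓ q.2 ≤ φ).sup
            (fun q => bpa S boxI q.1 ⊓ bpa S boxJ q.2) := by
  intro φ hφ
  have hfused := eq_sup_inf_of_indep htop miI miJ (monotone_of_modal miIJ miiIJ)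
    (inf_le_map_inf_of_modal miIJ miiIJ) mivI mivJ mindep hφ
  exact ⟨hfused, hfused.trans <|
    sup_inf_box_eq_sup_inf_bpa (monotone_of_modal miI miiI) (monotone_of_modal miJ miiJ) φ⟩

/-- For independent sensors,
`□ᵢⱼ φ = ⊔_{ψ⊓η ≤ φ} (□ᵢψ ⊓ □ⱼη) = ⊔_{ψ⊓η ≤ φ} (ψ^{□ᵢ} ⊓ η^{□ⱼ})`. -/
theorem box_fused_eq_sup {B : Type*} [BooleanAlgebra B]
    (S : Finset B)
    (hmeet : ∀ x ∈ S, ∀ y ∈ S, x ⊓ y ∈ S)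
    (htop : ⊤ ∈ S)
    (boxI boxJ boxIJ : B → B)
    (miI : boxI ⊤ = ⊤)
    (miiI : ∀ x y : B, boxI (xᶜ ⊔ y) ≤ (boxI x)ᶜ ⊔ boxI y)
    (miJ : boxJ ⊤ = ⊤)
    (miiJ : ∀ x y : B, boxJ (xᶜ ⊔ y) ≤ (boxJ x)ᶜ ⊔ boxJ y)
    (miIJ : boxIJ ⊤ = ⊤)
    (miiIJ : ∀ x y : B, boxIJ (xᶜ ⊔ y) ≤ (boxIJ x)ᶜ ⊔ boxIJ y)
    (mivI : ∀ x : B, boxI x ≤ boxIJ x)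
    (mivJ : ∀ x : B, boxJ x ≤ boxIJ x)
    (mindep : ∀ x : B, boxIJ x ≤ boxI x ⊔ boxJ x) :
    ∀ φ ∈ S,
      boxIJ φ =
          ((S ×ˢ S).filter fun q => q.1 ⊓ q.2 ≤ φ).sup (fun q => boxI q.1 ⊓ boxJ q.2) ∧
        boxIJ φ =
          ((S ×ˢ S).filter fun q => q.1 ⊓ q.2 ≤ φ).sup
            (fun q => bpa S boxI q.1 ⊓ bpa S boxJ q.2) :=
  box_fused_eq_sup_general S htop boxI boxJ boxIJ miI miiI miJ miiJ miIJ miiIJ mivI mivJ mindep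
end

section
/- Let B be a Boolean algebra, S a finite subset of B closed under meet ⊓ and containing ⊤, and let □ᵢ, □ⱼ, □ᵢⱼ : B → B all satisfy the modal axioms (m.i) and (m.ii), axiom (m.iv) (□ᵢ x ≤ □ᵢⱼ x and □ⱼ x ≤ □ᵢⱼ x for all x ∈ B) and the independence axiom (m.indep) (□ᵢⱼ x ≤ □ᵢ x ⊔ □ⱼ x for all x ∈ B). Then the fused basic propositional assignment is computed from the individual ones by: for every φ ∈ S, φ^{□ᵢⱼ} = ⊔_{ψ,η∈S: ψ⊓η = φ} (ψ^{□ᵢ} ⊓ η^{□ⱼ}). -/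
open scoped Classical

/-!
Each `ψ^□` lies below `□ψ` and is disjoint from `□ξ` whenever `ψ ≰ ξ` (because `ψ ⊓ ξ < ψ` is
one of the elements subtracted in `ψ^□`), and the `ψ^□`, `ψ ∈ S`, cover `⊤`. Hence `φ^{□ᵢⱼ}` is the
join of its meets with the cells `ψ^{□ᵢ} ⊓ η^{□ⱼ}`. Such a cell lies below `□ᵢⱼ (ψ ⊓ η)`, so it
misses `φ^{□ᵢⱼ}` when `ψ ⊓ η < φ`; and by independence `□ᵢⱼ χ ≤ □ᵢ χ ⊔ □ⱼ χ`, so it misses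
`□ᵢⱼ χ` whenever `ψ ≰ χ` and `η ≰ χ`. This leaves exactly the cells with `ψ ⊓ η = φ`, and shows
that each of them lies in `φ^{□ᵢⱼ}`.
-/

structure IsModalOperator {B : Type*} [BooleanAlgebra B] (box : B → B) : Prop where
  map_top : box ⊤ = ⊤
  map_compl_sup_le (x y : B) : box (xᶜ ⊔ y) ≤ (box x)ᶜ ⊔ box y

namespace IsModalOperator

variable {B : Type*} [BooleanAlgebra B] {box : B → B}

theorem monotone (h : IsModalOperator box) : Monotone box := by
  intro x y hxy
  have hmp := h.map_compl_sup_le x y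
  rw [sup_comm, ← himp_eq, himp_eq_top_iff.2 hxy, h.map_top, sup_comm, ← himp_eq,
    top_le_iff, himp_eq_top_iff] at hmp
  exact hmp

theorem map_inf (h : IsModalOperator box) (x y : B) : box (x ⊓ y) = box x ⊓ box y := by
  refine le_antisymm (le_inf (h.monotone inf_le_left) (h.monotone inf_le_right)) ?_
  have hy : y ≤ xᶜ ⊔ (x ⊓ y) := by
    rw [sup_inf_left, compl_sup_eq_top, top_inf_eq]
    exact le_sup_right
  have hmp := (h.monotone hy).trans (h.map_compl_sup_le x (x ⊓ y))
  rwa [sup_comm, ← himp_eq, le_himp_iff'] at hmp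

end IsModalOperator

section Bpa

variable {B : Type*} [BooleanAlgebra B] {S : Finset B} {box : B → B}

theorem box_le_sup_bpa_s11 {χ : B} (hχ : χ ∈ S) : box χ ≤ S.sup (bpa S box) := by
  refine (S.finite_toSet.wellFoundedOn (r := (· < ·))).induction
    (P := fun χ => box χ ≤ S.sup (bpa S box)) hχ fun χ hχ ih => ?_
  calc box χ ≤ bpa S box χ ⊔ (S.filter fun ψ => ψ < χ).sup box := by
        rw [bpa, sup_comm, sup_inf_left, sup_compl_eq_top, inf_top_eq]
        exact le_sup_right
    _ ≤ S.sup (bpa S box) := by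
        refine sup_le (Finset.le_sup hχ) (Finset.sup_le fun ψ hψ => ?_)
        rw [Finset.mem_filter] at hψ
        exact ih ψ hψ.1 hψ.2

theorem sup_bpa_eq_top (hbox : box ⊤ = ⊤) (htop : ⊤ ∈ S) : S.sup (bpa S box) = ⊤ :=
  top_unique (hbox ▸ box_le_sup_bpa_s11 htop)

theorem disjoint_bpa_box_of_lt {φ χ : B} (hχ : χ ∈ S) (hlt : χ < φ) :
    Disjoint (bpa S box φ) (box χ) :=
  disjoint_compl_left.mono inf_le_right (Finset.le_sup (Finset.mem_filter.2 ⟨hχ, hlt⟩))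

theorem disjoint_bpa_box_of_not_le (hbox : IsModalOperator box) {ψ ξ : B}
    (hψξ : ψ ⊓ ξ ∈ S) (h : ¬ψ ≤ ξ) : Disjoint (bpa S box ψ) (box ξ) := by
  have hlt : ψ ⊓ ξ < ψ := inf_le_left.lt_of_ne fun heq => h (heq ▸ inf_le_right)
  have hle : bpa S box ψ ⊓ box ξ ≤ box (ψ ⊓ ξ) := by
    rw [hbox.map_inf]
    exact inf_le_inf_right _ inf_le_left
  exact disjoint_iff_inf_le.2
    ((le_inf inf_le_left hle).trans (disjoint_bpa_box_of_lt hψξ hlt).le_bot)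

end Bpa

section Fusion

variable {B : Type*} [BooleanAlgebra B] {S : Finset B} {boxI boxJ boxIJ : B → B}

theorem bpa_inf_bpa_le_box_inf (hIJ : IsModalOperator boxIJ) (hI : ∀ x, boxI x ≤ boxIJ x)
    (hJ : ∀ x, boxJ x ≤ boxIJ x) (ψ η : B) :
    bpa S boxI ψ ⊓ bpa S boxJ η ≤ boxIJ (ψ ⊓ η) := by
  rw [hIJ.map_inf]
  exact inf_le_inf (inf_le_left.trans (hI ψ)) (inf_le_left.trans (hJ η))

theorem disjoint_bpa_inf_bpa_box (hI : IsModalOperator boxI) (hJ : IsModalOperator boxJ)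
    (hmeet : ∀ x ∈ S, ∀ y ∈ S, x ⊓ y ∈ S) (hindep : ∀ x, boxIJ x ≤ boxI x ⊔ boxJ x)
    {ψ η χ : B} (hψ : ψ ∈ S) (hη : η ∈ S) (hχ : χ ∈ S) (hψχ : ¬ψ ≤ χ) (hηχ : ¬η ≤ χ) :
    Disjoint (bpa S boxI ψ ⊓ bpa S boxJ η) (boxIJ χ) := by
  refine Disjoint.mono_right (hindep χ) (disjoint_sup_right.2 ⟨?_, ?_⟩)
  · exact (disjoint_bpa_box_of_not_le hI (hmeet _ hψ _ hχ) hψχ).mono_left inf_le_left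
  · exact (disjoint_bpa_box_of_not_le hJ (hmeet _ hη _ hχ) hηχ).mono_left inf_le_right

theorem disjoint_bpa_bpa_inf_bpa_of_inf_ne (hI : IsModalOperator boxI)
    (hJ : IsModalOperator boxJ) (hIJ : IsModalOperator boxIJ)
    (hmeet : ∀ x ∈ S, ∀ y ∈ S, x ⊓ y ∈ S) (hIle : ∀ x, boxI x ≤ boxIJ x)
    (hJle : ∀ x, boxJ x ≤ boxIJ x) (hindep : ∀ x, boxIJ x ≤ boxI x ⊔ boxJ x)
    {φ ψ η : B} (hφ : φ ∈ S) (hψ : ψ ∈ S) (hη : η ∈ S) (hne : ψ ⊓ η ≠ φ) :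
    Disjoint (bpa S boxIJ φ) (bpa S boxI ψ ⊓ bpa S boxJ η) := by
  by_cases hle : ψ ⊓ η ≤ φ
  · exact (disjoint_bpa_box_of_lt (hmeet _ hψ _ hη) (hle.lt_of_ne hne)).mono_right
      (bpa_inf_bpa_le_box_inf hIJ hIle hJle ψ η)
  · refine (disjoint_bpa_inf_bpa_box hI hJ hmeet hindep hψ hη hφ ?_ ?_).symm.mono_left
      inf_le_left
    · exact fun h => hle (inf_le_left.trans h)
    · exact fun h => hle (inf_le_right.trans h)

theorem bpa_le_sup_bpa_inf_bpa (hI : IsModalOperator boxI) (hJ : IsModalOperator boxJ)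
    (hIJ : IsModalOperator boxIJ) (hmeet : ∀ x ∈ S, ∀ y ∈ S, x ⊓ y ∈ S) (htop : ⊤ ∈ S)
    (hIle : ∀ x, boxI x ≤ boxIJ x) (hJle : ∀ x, boxJ x ≤ boxIJ x)
    (hindep : ∀ x, boxIJ x ≤ boxI x ⊔ boxJ x) {φ : B} (hφ : φ ∈ S) :
    bpa S boxIJ φ ≤ ((S ×ˢ S).filter fun q => q.1 ⊓ q.2 = φ).sup
      fun q => bpa S boxI q.1 ⊓ bpa S boxJ q.2 := by
  calc bpa S boxIJ φ = bpa S boxIJ φ ⊓ (S.sup (bpa S boxI) ⊓ S.sup (bpa S boxJ)) := by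
        rw [sup_bpa_eq_top hI.map_top htop, sup_bpa_eq_top hJ.map_top htop, inf_top_eq,
          inf_top_eq]
    _ = (S ×ˢ S).sup fun q => bpa S boxIJ φ ⊓ (bpa S boxI q.1 ⊓ bpa S boxJ q.2) := by
        rw [Finset.sup_inf_sup, Finset.sup_inf_distrib_left]
    _ ≤ _ := Finset.sup_le fun q hq => by
        by_cases hqφ : q.1 ⊓ q.2 = φ
        · exact inf_le_right.trans
            (Finset.le_sup (f := fun q => bpa S boxI q.1 ⊓ bpa S boxJ q.2)
              (Finset.mem_filter.2 ⟨hq, hqφ⟩))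
        · rw [Finset.mem_product] at hq
          rw [(disjoint_bpa_bpa_inf_bpa_of_inf_ne hI hJ hIJ hmeet hIle hJle hindep hφ hq.1 hq.2
            hqφ).eq_bot]
          exact bot_le

theorem sup_bpa_inf_bpa_le_bpa (hI : IsModalOperator boxI) (hJ : IsModalOperator boxJ)
    (hIJ : IsModalOperator boxIJ) (hmeet : ∀ x ∈ S, ∀ y ∈ S, x ⊓ y ∈ S)
    (hIle : ∀ x, boxI x ≤ boxIJ x) (hJle : ∀ x, boxJ x ≤ boxIJ x)
    (hindep : ∀ x, boxIJ x ≤ boxI x ⊔ boxJ x) (φ : B) :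
    (((S ×ˢ S).filter fun q => q.1 ⊓ q.2 = φ).sup
      fun q => bpa S boxI q.1 ⊓ bpa S boxJ q.2) ≤ bpa S boxIJ φ := by
  refine Finset.sup_le fun q hq => ?_
  obtain ⟨hqS, rfl⟩ := Finset.mem_filter.1 hq
  rw [Finset.mem_product] at hqS
  refine le_inf (bpa_inf_bpa_le_box_inf hIJ hIle hJle q.1 q.2) ?_
  refine le_compl_iff_disjoint_right.2 (Finset.disjoint_sup_right.2 fun χ hχ => ?_)
  obtain ⟨hχS, hχlt⟩ := Finset.mem_filter.1 hχ
  refine disjoint_bpa_inf_bpa_box hI hJ hmeet hindep hqS.1 hqS.2 hχS ?_ ?_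
  · exact fun h => hχlt.not_ge (inf_le_left.trans h)
  · exact fun h => hχlt.not_ge (inf_le_right.trans h)

end Fusion

/-- The fused basic propositional assignment satisfies
`φ^{□ᵢⱼ} = ⊔_{ψ⊓η = φ} (ψ^{□ᵢ} ⊓ η^{□ⱼ})` for every `φ ∈ S`. -/
theorem bpa_fused_eq_sup {B : Type*} [BooleanAlgebra B]
    (S : Finset B)
    (hmeet : ∀ x ∈ S, ∀ y ∈ S, x ⊓ y ∈ S)
    (htop : ⊤ ∈ S)
    (boxI boxJ boxIJ : B → B)
    (miI : boxI ⊤ = ⊤)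
    (miiI : ∀ x y : B, boxI (xᶜ ⊔ y) ≤ (boxI x)ᶜ ⊔ boxI y)
    (miJ : boxJ ⊤ = ⊤)
    (miiJ : ∀ x y : B, boxJ (xᶜ ⊔ y) ≤ (boxJ x)ᶜ ⊔ boxJ y)
    (miIJ : boxIJ ⊤ = ⊤)
    (miiIJ : ∀ x y : B, boxIJ (xᶜ ⊔ y) ≤ (boxIJ x)ᶜ ⊔ boxIJ y)
    (mivI : ∀ x : B, boxI x ≤ boxIJ x)
    (mivJ : ∀ x : B, boxJ x ≤ boxIJ x)
    (mindep : ∀ x : B, boxIJ x ≤ boxI x ⊔ boxJ x) :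
    ∀ φ ∈ S,
      bpa S boxIJ φ =
        ((S ×ˢ S).filter fun q => q.1 ⊓ q.2 = φ).sup
          (fun q => bpa S boxI q.1 ⊓ bpa S boxJ q.2) := by
  have hI : IsModalOperator boxI := ⟨miI, miiI⟩
  have hJ : IsModalOperator boxJ := ⟨miJ, miiJ⟩
  have hIJ : IsModalOperator boxIJ := ⟨miIJ, miiIJ⟩
  intro φ hφ
  exact le_antisymm (bpa_le_sup_bpa_inf_bpa hI hJ hIJ hmeet htop mivI mivJ mindep hφ)
    (sup_bpa_inf_bpa_le_bpa hI hJ hIJ hmeet mivI mivJ mindep φ)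
end
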